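/- Let K be the unique positive real number satisfying K = e^{-(K+1)}. Then for all ϵ > 0, δ > 0, η ∈ ℝ, and c ∈ ℝ with |c| ≤ δ, it holds that η·(c - δ·tanh(K·δ·η/ϵ)) ≤ ϵ. -/

import Mathlib

/-!
`1 - tanh s = 2 / (exp (2 s) + 1)`, so with `s = K x / ϵ` the quantity
`x (1 - tanh s)` equals `(ϵ / K) · u / (exp u + 1)` for `u = 2 s`. The fixed-point equation
`K = exp (-(K + 1))` says exactly that `K` is the maximum of `u ↦ u / (exp u + 1)`
(by `exp v ≥ v + 1` at `v = u - (K + 1)`), so this is at most `ϵ`. The term `η c` is absorbed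
by `|η| δ`, and `x ↦ x tanh (a x)` is even, which reduces everything to `x = |δ η| ≥ 0`.
-/

open Real

lemma le_mul_exp_add_one_of_eq_exp {K : ℝ} (hK : K = exp (-(K + 1))) (u : ℝ) :
    u ≤ K * (exp u + 1) := by
  have h : K * exp u = exp (-(K + 1) + u) := by rw [exp_add, ← hK]
  linarith [add_one_le_exp (-(K + 1) + u)]

lemma one_sub_tanh (x : ℝ) : 1 - tanh x = 2 / (exp (2 * x) + 1) := by
  have hx : exp (2 * x) = exp x * exp x := by rw [← exp_add, two_mul]
  have hneg : exp (-x) = (exp x)⁻¹ := exp_neg x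
  rw [tanh_eq, hx, hneg]
  field_simp
  ring

lemma mul_one_sub_tanh_le {K ϵ : ℝ} (hK : K = exp (-(K + 1))) (hϵ : 0 < ϵ) (x : ℝ) :
    x * (1 - tanh (K * x / ϵ)) ≤ ϵ := by
  have hKpos : 0 < K := hK ▸ exp_pos _
  have hden : 0 < exp (2 * (K * x / ϵ)) + 1 := by positivity
  have hu := le_mul_exp_add_one_of_eq_exp hK (2 * (K * x / ϵ))
  have h2x : 2 * x = ϵ / K * (2 * (K * x / ϵ)) := by field_simp
  rw [one_sub_tanh, mul_div_assoc', div_le_iff₀ hden, mul_comm x, h2x]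
  calc ϵ / K * (2 * (K * x / ϵ)) ≤ ϵ / K * (K * (exp (2 * (K * x / ϵ)) + 1)) := by gcongr
    _ = ϵ * (exp (2 * (K * x / ϵ)) + 1) := by field_simp

lemma mul_tanh_mul_eq_abs_mul (a x : ℝ) : x * tanh (a * x) = |x| * tanh (a * |x|) := by
  rcases abs_cases x with ⟨hx, -⟩ | ⟨hx, -⟩
  · rw [hx]
  · rw [hx, mul_neg, tanh_neg, neg_mul_neg]

theorem stmt_3_general (K : ℝ) (hKfix : K = Real.exp (-(K + 1)))
    (ϵ δ : ℝ) (hϵ : 0 < ϵ) (η c : ℝ) (hc : |c| ≤ δ) :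
    η * (c - δ * Real.tanh (K * δ * η / ϵ)) ≤ ϵ := by
  set x := δ * η
  have hηc : η * c ≤ |x| := by
    rw [abs_mul, abs_of_nonneg ((abs_nonneg c).trans hc), mul_comm δ]
    calc η * c ≤ |η| * |c| := (le_abs_self _).trans (abs_mul η c).le
      _ ≤ |η| * δ := by gcongr
  have hodd : η * (δ * tanh (K * δ * η / ϵ)) = |x| * tanh (K * |x| / ϵ) := by
    simp only [mul_div_right_comm K, mul_assoc K δ η]
    rw [← mul_tanh_mul_eq_abs_mul, ← mul_assoc, mul_comm η δ]
  calc η * (c - δ * tanh (K * δ * η / ϵ)) ≤ |x| * (1 - tanh (K * |x| / ϵ)) := by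
        rw [mul_sub, hodd, mul_sub, mul_one]; linarith
    _ ≤ ϵ := mul_one_sub_tanh_le hKfix hϵ |x|

/-- Robustifying-term bound: with `K` the positive fixed point of `K = exp (-(K+1))`,
for all `ϵ, δ > 0`, `η ∈ ℝ` and `c` with `|c| ≤ δ`, one has
`η (c - δ tanh (K δ η / ϵ)) ≤ ϵ`. -/
theorem stmt_3 (K : ℝ) (hK : 0 < K) (hKfix : K = Real.exp (-(K + 1)))
    (ϵ δ : ℝ) (hϵ : 0 < ϵ) (hδ : 0 < δ) (η c : ℝ) (hc : |c| ≤ δ) :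
    η * (c - δ * Real.tanh (K * δ * η / ϵ)) ≤ ϵ :=
  stmt_3_general K hKfix ϵ δ hϵ η c hc
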